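/- arXiv:2207.12523 — 2 statements merged into one kernel-verified Lean document; each statement's English description precedes it below -/
import Mathlib

section
/- An irreflexive oriented graph G has an ios-injective homomorphism to the directed 3-cycle C_3 if and only if neither H_3 nor H_3^c is a subgraph of G and every directed cycle in G has length divisible by 3 (equivalently, if and only if none of H_3, H_3^c, and the directed cycles C_n with n not congruent to 0 modulo 3 is a subgraph of G). -/
/-!
An ios-injective homomorphism to `C_3` forces in- and out-degrees at most one, as `C_3` has them;
conversely, with loops excluded (a loop is a copy of `C_1`), excluding the two hats says exactly
this. Under these degree bounds an oriented walk straightens into a directed walk of the same net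
length along the orbit of the successor map `s`. A closed one of length `m` makes its start `a` an
`m`-periodic point of `s`, and the orbit of `a` spans a copy of `C_p` for the minimal period
`p ∣ m`; hence `3 ∣ m`. So closed oriented walks have net length divisible by `3`, and the net
length from a root of each weak component is a homomorphism to `C_3`, ios-injective by the degree
bounds.
-/

/-- A homomorphism of directed graphs (given as binary relations). -/
def IsHom {A : Type} {B : Type} (R : A → A → Prop) (S : B → B → Prop) (f : A → B) : Prop :=
  ∀ x y, R x y → S (f x) (f y)

/-- ios-injectivity: injective on in-neighbourhoods and on out-neighbourhoods separately. -/
def IosInj {A : Type} {B : Type} (R : A → A → Prop) (f : A → B) : Prop :=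
  ∀ x : A, Set.InjOn f {y | R y x} ∧ Set.InjOn f {y | R x y}

/-- iot-injectivity: injective on the union of in- and out-neighbourhoods. -/
def IotInj {A : Type} {B : Type} (R : A → A → Prop) (f : A → B) : Prop :=
  ∀ x : A, Set.InjOn f ({y | R y x} ∪ {y | R x y})

/-- An oriented graph: between two distinct vertices at most one arc. -/
def IsOriented {A : Type} (R : A → A → Prop) : Prop :=
  ∀ x y, x ≠ y → ¬(R x y ∧ R y x)

/-- Irreflexive (no loops). -/
def NoLoops {A : Type} (R : A → A → Prop) : Prop := ∀ x, ¬ R x x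

/-- `R` is (isomorphic to) a subgraph of `S`: an injective arc-preserving map. -/
def Subg {A : Type} {B : Type} (R : A → A → Prop) (S : B → B → Prop) : Prop :=
  ∃ g : A → B, Function.Injective g ∧ IsHom R S g

/-- There exists an ios-injective homomorphism of `R` to `S`. -/
def IosHomEx {A : Type} {B : Type} (R : A → A → Prop) (S : B → B → Prop) : Prop :=
  ∃ g : A → B, IsHom R S g ∧ IosInj R g

/-- There exists an iot-injective homomorphism of `R` to `S`. -/
def IotHomEx {A : Type} {B : Type} (R : A → A → Prop) (S : B → B → Prop) : Prop :=
  ∃ g : A → B, IsHom R S g ∧ IotInj R g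

/-- Converse (all arcs reversed). -/
def convRel {A : Type} (R : A → A → Prop) : A → A → Prop := fun x y => R y x

/-- Transitive tournament `T_n`. -/
def TTrel (n : ℕ) : Fin n → Fin n → Prop := fun i j => i < j

/-- Reflexive transitive tournament `T_2^r`. -/
def T2r : Fin 2 → Fin 2 → Prop := fun i j => i ≤ j

/-- Reflexive one-vertex tournament `T_1^r`. -/
def T1r : PUnit → PUnit → Prop := fun _ _ => True

/-- Directed path `P_N` on `N` vertices. -/
def DPathRel (N : ℕ) : Fin N → Fin N → Prop := fun x y => (y : ℕ) = (x : ℕ) + 1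

/-- Directed cycle `C_m` on `m` vertices. -/
def DCycRel (m : ℕ) : Fin m → Fin m → Prop := fun x y => (y : ℕ) = ((x : ℕ) + 1) % m

/-- Oriented path on `n+1` vertices: edge `t` (between `v_t` and `v_{t+1}`) is
oriented forwards iff `σ t = true`. -/
def OPathRel (n : ℕ) (σ : ℕ → Bool) : Fin (n + 1) → Fin (n + 1) → Prop :=
  fun x y => ∃ t : ℕ, t < n ∧
    ((σ t = true ∧ (x : ℕ) = t ∧ (y : ℕ) = t + 1) ∨
     (σ t = false ∧ (x : ℕ) = t + 1 ∧ (y : ℕ) = t))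

/-- Oriented cycle on `m` vertices: edge `t` (between `v_t` and `v_{t+1 mod m}`) is
oriented forwards iff `σ t = true`. -/
def OCycRel (m : ℕ) (σ : ℕ → Bool) : Fin m → Fin m → Prop :=
  fun x y => ∃ t : ℕ, t < m ∧
    ((σ t = true ∧ (x : ℕ) = t ∧ (y : ℕ) = (t + 1) % m) ∨
     (σ t = false ∧ (x : ℕ) = (t + 1) % m ∧ (y : ℕ) = t))

/-- The hat `H_3`: arcs `v_0 → v_1` and `v_2 → v_1`. -/
def H3rel : Fin 3 → Fin 3 → Prop := fun i j => (i = 0 ∧ j = 1) ∨ (i = 2 ∧ j = 1)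

/-- `H_4`: arcs `h_0 → h_3`, `h_1 → h_3`, `h_2 → h_3`. -/
def H4rel : Fin 4 → Fin 4 → Prop := fun i j => (i = 0 ∨ i = 1 ∨ i = 2) ∧ j = 3

/-- `A_4`: arcs `h_0 → h_2`, `h_1 → h_2`, `h_2 → h_3`. -/
def A4rel : Fin 4 → Fin 4 → Prop := fun i j => ((i = 0 ∨ i = 1) ∧ j = 2) ∨ (i = 2 ∧ j = 3)

/-- `H_5`: two directed paths of length two with a common initial vertex `0`:
arcs `0→1`, `1→2`, `0→3`, `3→4`. -/
def H5rel : Fin 5 → Fin 5 → Prop :=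
  fun i j => (i = 0 ∧ j = 1) ∨ (i = 1 ∧ j = 2) ∨ (i = 0 ∧ j = 3) ∨ (i = 3 ∧ j = 4)

/-- `B_2`: arcs `a→b`, `c→b`, `c→d`, `e→d` (vertices `a,b,c,d,e = 0,1,2,3,4`). -/
def B2rel : Fin 5 → Fin 5 → Prop :=
  fun i j => (i = 0 ∧ j = 1) ∨ (i = 2 ∧ j = 1) ∨ (i = 2 ∧ j = 3) ∨ (i = 4 ∧ j = 3)

/-- `X_2`: orientation of `K_{1,4}` with centre `0` of in-degree 2 and out-degree 2:
arcs `1→0`, `2→0`, `0→3`, `0→4`. -/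
def X2rel : Fin 5 → Fin 5 → Prop :=
  fun i j => ((i = 1 ∨ i = 2) ∧ j = 0) ∨ (i = 0 ∧ (j = 3 ∨ j = 4))

/-- An orientation of the star `K_{1,3}`: centre `none`, leaves `some i`;
edge `i` points away from the centre iff `ε i = true`. -/
def starRel (ε : Fin 3 → Bool) : Option (Fin 3) → Option (Fin 3) → Prop :=
  fun u v => ∃ i : Fin 3,
    (ε i = true ∧ u = none ∧ v = some i) ∨ (ε i = false ∧ u = some i ∧ v = none)

/-- An oriented `k`-colouring: for arcs `xy` and `vw`, `f x = f w → f y ≠ f v`. -/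
def OrCol {A : Type} (R : A → A → Prop) {k : ℕ} (f : A → Fin k) : Prop :=
  ∀ x y v w, R x y → R v w → f x = f w → f y ≠ f v

/-- Proper: distinct adjacent vertices get different colours. -/
def ProperCol {A : Type} {B : Type} (R : A → A → Prop) (f : A → B) : Prop :=
  ∀ x y, R x y → x ≠ y → f x ≠ f y

/-- Disjoint union of two directed graphs. -/
def sumRel {A B : Type} (R : A → A → Prop) (S : B → B → Prop) : A ⊕ B → A ⊕ B → Prop
  | Sum.inl a, Sum.inl a' => R a a'
  | Sum.inr b, Sum.inr b' => S b b'
  | _, _ => False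

/-- Net-length of the oriented cycle on `m` vertices with orientation `σ`:
number of forwards arcs minus number of backwards arcs. -/
def netLen (m : ℕ) (σ : ℕ → Bool) : ℤ :=
  (((Finset.range m).filter fun t => σ t = true).card : ℤ) -
    (((Finset.range m).filter fun t => σ t = false).card : ℤ)

/-- Undirected connectivity relation of a directed graph. -/
def UConn {V : Type} (E : V → V → Prop) : V → V → Prop :=
  Relation.ReflTransGen (fun a b => E a b ∨ E b a)

/-- The relation induced on the connected component of `x`. -/
def componentRel {V : Type} (E : V → V → Prop) (x : V) :
    {y : V // UConn E x y} → {y : V // UConn E x y} → Prop :=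
  fun a b => E a.val b.val

/-- Isomorphism of directed graphs. -/
def IsoRel {A B : Type} (R : A → A → Prop) (S : B → B → Prop) : Prop :=
  ∃ e : A ≃ B, ∀ a a', R a a' ↔ S (e a) (e a')

/-- An alternating matching in the oriented path on `n+1` vertices (edges `0,…,n-1`,
orientations `σ`): `μ t` means edge `t` is in the matching.  It is a matching,
saturates every internal (degree-two) vertex, and consecutive matching edges have
opposite orientations. -/
def PathAltMatching (n : ℕ) (σ : ℕ → Bool) (μ : ℕ → Prop) : Prop :=
  (∀ t, μ t → t < n) ∧
  (∀ t, ¬(μ t ∧ μ (t + 1))) ∧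
  (∀ v, 1 ≤ v → v + 1 ≤ n → (μ (v - 1) ∨ μ v)) ∧
  (∀ t t', μ t → μ t' → t < t' → (∀ s, t < s → s < t' → ¬ μ s) → σ t ≠ σ t')

/-- An alternating matching in the oriented cycle on `m` vertices (edges mod `m`):
a matching saturating every vertex whose successive edges (cyclically) have
opposite orientations. -/
def CycAltMatching (m : ℕ) (σ : ℕ → Bool) (μ : ℕ → Prop) : Prop :=
  (∀ t, μ t → t < m) ∧
  (∀ t, t < m → ¬(μ t ∧ μ ((t + 1) % m))) ∧
  (∀ v, v < m → (μ v ∨ μ ((v + m - 1) % m))) ∧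
  (∀ t d, t < m → 0 < d → d < m → μ t → μ ((t + d) % m) →
    (∀ s, 0 < s → s < d → ¬ μ ((t + s) % m)) → σ t ≠ σ ((t + d) % m))

variable {V W : Type}

theorem IsHom.comp {U : Type} {R : U → U → Prop} {S : V → V → Prop} {T : W → W → Prop}
    {f : V → W} {g : U → V} (hf : IsHom S T f) (hg : IsHom R S g) : IsHom R T (f ∘ g) :=
  fun x y h => hf _ _ (hg x y h)

theorem IsHom.leftUnique_of_iosInj {E : V → V → Prop} {S : W → W → Prop} {f : V → W}
    (hf : IsHom E S f) (hinj : IosInj E f) (hS : Relator.LeftUnique S) : Relator.LeftUnique E :=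
  fun _ _ z hxz hyz => (hinj z).1 hxz hyz (hS (hf _ _ hxz) (hf _ _ hyz))

theorem IsHom.rightUnique_of_iosInj {E : V → V → Prop} {S : W → W → Prop} {f : V → W}
    (hf : IsHom E S f) (hinj : IosInj E f) (hS : Relator.RightUnique S) :
    Relator.RightUnique E :=
  fun x _ _ hxy hxz => (hinj x).2 hxy hxz (hS (hf _ _ hxy) (hf _ _ hxz))

theorem iosInj_of_leftUnique_of_rightUnique {E : V → V → Prop} (hin : Relator.LeftUnique E)
    (hout : Relator.RightUnique E) (f : V → W) : IosInj E f :=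
  fun _ => ⟨fun _ hu _ hw _ => hin hu hw, fun _ hu _ hw _ => hout hu hw⟩

theorem Relator.RightUnique.exists_fun {E : V → V → Prop}
    (h : Relator.RightUnique E) : ∃ s : V → V, ∀ ⦃x y⦄, E x y → s x = y := by
  classical
  refine ⟨fun x => if hx : ∃ y, E x y then hx.choose else x, fun x y hxy => ?_⟩
  dsimp only
  rw [dif_pos ⟨y, hxy⟩]
  exact h (Exists.choose_spec _) hxy

theorem subg_convRel_iff {A B : Type} {R : A → A → Prop} {S : B → B → Prop} :
    Subg (convRel R) S ↔ Subg R (convRel S) :=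
  exists_congr fun _ => and_congr_right fun _ => forall_comm

section DirectedCycle

variable {m k : ℕ} [NeZero m]

theorem dCycRel_iff {x y : Fin m} : DCycRel m x y ↔ y = x + 1 := by
  rw [DCycRel, Fin.ext_iff, Fin.val_add, Fin.val_one', Nat.add_mod_mod]

theorem leftUnique_dCycRel : Relator.LeftUnique (DCycRel m) := fun _ _ _ hx hy =>
  add_right_cancel ((dCycRel_iff.1 hx).symm.trans (dCycRel_iff.1 hy))

theorem rightUnique_dCycRel : Relator.RightUnique (DCycRel m) := fun _ _ _ hy hz =>
  (dCycRel_iff.1 hy).trans (dCycRel_iff.1 hz).symm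

open Fin.NatCast in
theorem dvd_of_isHom_dCycRel [NeZero k] {φ : Fin m → Fin k}
    (h : IsHom (DCycRel m) (DCycRel k) φ) : k ∣ m := by
  have hstep : ∀ i : ℕ, φ ((i + 1 : ℕ) : Fin m) = φ i + 1 := fun i => by
    rw [Nat.cast_succ]
    exact dCycRel_iff.1 (h _ _ (dCycRel_iff.2 rfl))
  have hiter : ∀ i : ℕ, φ i = φ 0 + (i : Fin k) := by
    intro i
    induction i with
    | zero => simp
    | succ i ih => rw [hstep, ih, Nat.cast_succ, add_assoc]
  have hm := hiter m
  rwa [Fin.natCast_self, left_eq_add, Fin.natCast_eq_zero] at hm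

theorem subg_dCycRel_one_of_loop {E : V → V → Prop} {x : V} (h : E x x) :
    Subg (DCycRel 1) E :=
  ⟨fun _ => x, fun i j _ => Subsingleton.elim i j, fun _ _ _ => h⟩

end DirectedCycle

section Hat

variable {E : V → V → Prop}

theorem not_subg_H3rel (hin : Relator.LeftUnique E) : ¬ Subg H3rel E := by
  rintro ⟨g, hg, hhom⟩
  exact absurd (hg (hin (hhom 0 1 (Or.inl ⟨rfl, rfl⟩)) (hhom 2 1 (Or.inr ⟨rfl, rfl⟩))))
    (by decide)

theorem leftUnique_of_not_subg_H3rel (hloop : NoLoops E) (h : ¬ Subg H3rel E) :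
    Relator.LeftUnique E := by
  intro x y z hxz hyz
  by_contra hxy
  have hxz' : x ≠ z := fun h => hloop z (h ▸ hxz)
  have hyz' : y ≠ z := fun h => hloop z (h ▸ hyz)
  refine h ⟨![x, z, y], ?_, ?_⟩
  · intro i j hij
    fin_cases i <;> fin_cases j <;> simp_all [eq_comm]
  · rintro i j (⟨rfl, rfl⟩ | ⟨rfl, rfl⟩) <;> assumption

end Hat

inductive OrientedWalk (E : V → V → Prop) : V → V → ℤ → Prop
  | refl (a : V) : OrientedWalk E a a 0
  | forward {a b c : V} {n : ℤ} : OrientedWalk E a b n → E b c → OrientedWalk E a c (n + 1)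
  | backward {a b c : V} {n : ℤ} : OrientedWalk E a b n → E c b → OrientedWalk E a c (n - 1)

namespace OrientedWalk

variable {E : V → V → Prop} {a b c : V} {n n' : ℤ}

theorem trans (h : OrientedWalk E a b n) (h' : OrientedWalk E b c n') :
    OrientedWalk E a c (n + n') := by
  induction h' with
  | refl => simpa using h
  | forward _ hbc ih => rw [← add_assoc]; exact ih.forward hbc
  | backward _ hcb ih => rw [← add_sub_assoc]; exact ih.backward hcb

theorem symm (h : OrientedWalk E a b n) : OrientedWalk E b a (-n) := by
  induction h with
  | refl => simpa using refl _
  | forward _ hbc ih => simpa [sub_eq_neg_add, add_comm] using ((refl _).backward hbc).trans ih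
  | backward _ hcb ih =>
    simpa [neg_sub, sub_eq_neg_add, add_comm] using ((refl _).forward hcb).trans ih

end OrientedWalk

theorem exists_zmod_potential {E : V → V → Prop} {k : ℕ}
    (h : ∀ a n, OrientedWalk E a a n → (k : ℤ) ∣ n) :
    ∃ f : V → ZMod k, ∀ x y, E x y → f y = f x + 1 := by
  let S : Setoid V := ⟨fun a b => ∃ n, OrientedWalk E a b n,
    ⟨fun a => ⟨0, .refl a⟩, fun ⟨n, h⟩ => ⟨-n, h.symm⟩, fun ⟨n, h⟩ ⟨n', h'⟩ => ⟨_, h.trans h'⟩⟩⟩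
  choose pot hpot using fun v => Quotient.mk_out (s := S) v
  refine ⟨fun v => pot v, fun x y hxy => ?_⟩
  have hroot : (⟦x⟧ : Quotient S).out = (⟦y⟧ : Quotient S).out :=
    congrArg _ (Quotient.sound ⟨1, (OrientedWalk.refl x).forward hxy⟩)
  have hcl := h y _ ((hpot y).symm.trans (hroot ▸ (hpot x).forward hxy))
  rw [← Int.cast_one, ← Int.cast_add, ZMod.intCast_eq_intCast_iff_dvd_sub]
  convert hcl using 1
  ring

section Orbit

variable {E : V → V → Prop} {s : V → V} {a b : V} {m : ℕ}

def IsOrbitWalk (E : V → V → Prop) (s : V → V) (a : V) (m : ℕ) : Prop :=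
  ∀ i < m, E (s^[i] a) (s^[i + 1] a)

theorem isOrbitWalk_zero : IsOrbitWalk E s a 0 := fun _ hi => absurd hi (Nat.not_lt_zero _)

theorem isOrbitWalk_succ_iff :
    IsOrbitWalk E s a (m + 1) ↔ IsOrbitWalk E s a m ∧ E (s^[m] a) (s^[m + 1] a) :=
  Nat.forall_lt_succ_right

theorem isOrbitWalk_succ_iff' :
    IsOrbitWalk E s a (m + 1) ↔ E a (s a) ∧ IsOrbitWalk E s (s a) m := by
  simp only [IsOrbitWalk, Nat.forall_lt_succ_left, Function.iterate_succ_apply]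
  rfl

theorem dvd_of_isOrbitWalk_of_iterate_eq {d : ℕ}
    (hcyc : ∀ m : ℕ, 1 ≤ m → Subg (DCycRel m) E → d ∣ m) (hw : IsOrbitWalk E s a m)
    (hm : s^[m] a = a) : d ∣ m := by
  rcases m.eq_zero_or_pos with rfl | hm0
  · exact dvd_zero d
  have hper : Function.IsPeriodicPt s m a := hm
  have hp := hper.minimalPeriod_pos hm0
  refine (hcyc _ hp ⟨fun i => s^[i] a,
    fun i j hij => Fin.ext (Function.iterate_injOn_Iio_minimalPeriod i.2 j.2 hij),
    fun i j hij => ?_⟩).trans hper.minimalPeriod_dvd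
  dsimp only
  rw [hij, Function.iterate_mod_minimalPeriod_eq]
  exact hw i (i.2.trans_le (Nat.le_of_dvd hm0 hper.minimalPeriod_dvd))

variable (hs : ∀ ⦃x y⦄, E x y → s x = y) (hin : Relator.LeftUnique E)
include hs hin

theorem OrientedWalk.exists_isOrbitWalk {n : ℤ} (h : OrientedWalk E a b n) :
    ∃ m : ℕ, (IsOrbitWalk E s a m ∧ s^[m] a = b ∧ n = m) ∨
      (IsOrbitWalk E s b m ∧ s^[m] b = a ∧ n = -m) := by
  induction h with
  | refl => exact ⟨0, .inl ⟨isOrbitWalk_zero, rfl, rfl⟩⟩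
  | @forward b c n _ hbc ih =>
    obtain ⟨m, ⟨hw, rfl, rfl⟩ | ⟨hw, rfl, rfl⟩⟩ := ih
    · refine ⟨m + 1, .inl ⟨isOrbitWalk_succ_iff.2 ⟨hw, ?_⟩, ?_, by push_cast; rfl⟩⟩ <;>
        rw [Function.iterate_succ_apply', hs hbc]
      exact hbc
    · rcases m with _ | m
      · exact ⟨1, .inl ⟨isOrbitWalk_succ_iff'.2 ⟨hs hbc ▸ hbc, isOrbitWalk_zero⟩, hs hbc, rfl⟩⟩
      · obtain ⟨-, hw⟩ := isOrbitWalk_succ_iff'.1 hw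
        refine ⟨m, .inr ⟨hs hbc ▸ hw, ?_, by push_cast; ring⟩⟩
        rw [Function.iterate_succ_apply, hs hbc]
  | @backward b c n _ hcb ih =>
    obtain ⟨m, ⟨hw, rfl, rfl⟩ | ⟨hw, rfl, rfl⟩⟩ := ih
    · rcases m with _ | m
      · exact ⟨1, .inr ⟨isOrbitWalk_succ_iff'.2 ⟨hs hcb ▸ hcb, isOrbitWalk_zero⟩, hs hcb, rfl⟩⟩
      · obtain ⟨hw, hlast⟩ := isOrbitWalk_succ_iff.1 hw
        obtain rfl := hin hlast hcb
        exact ⟨m, .inl ⟨hw, rfl, by push_cast; ring⟩⟩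
    · refine ⟨m + 1, .inr ⟨isOrbitWalk_succ_iff'.2 ⟨hs hcb ▸ hcb, hs hcb ▸ hw⟩, ?_, ?_⟩⟩
      · rw [Function.iterate_succ_apply, hs hcb]
      · push_cast; ring

theorem OrientedWalk.dvd_of_closed {d : ℕ} (hcyc : ∀ m : ℕ, 1 ≤ m → Subg (DCycRel m) E → d ∣ m)
    {n : ℤ} (h : OrientedWalk E a a n) : (d : ℤ) ∣ n := by
  obtain ⟨m, ⟨hw, hm, rfl⟩ | ⟨hw, hm, rfl⟩⟩ := h.exists_isOrbitWalk hs hin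
  · exact Int.natCast_dvd_natCast.2 (dvd_of_isOrbitWalk_of_iterate_eq hcyc hw hm)
  · exact Int.dvd_neg.2 (Int.natCast_dvd_natCast.2 (dvd_of_isOrbitWalk_of_iterate_eq hcyc hw hm))

end Orbit

theorem exists_iosInj_hom_dCycRel_three_iff {V : Type} (E : V → V → Prop) :
    (∃ f : V → Fin 3, IsHom E (DCycRel 3) f ∧ IosInj E f) ↔
      (¬ Subg H3rel E ∧ ¬ Subg (convRel H3rel) E ∧
        ∀ m : ℕ, 1 ≤ m → Subg (DCycRel m) E → 3 ∣ m) := by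
  constructor
  · rintro ⟨f, hf, hinj⟩
    refine ⟨not_subg_H3rel (hf.leftUnique_of_iosInj hinj leftUnique_dCycRel), ?_,
      fun m hm hsub => ?_⟩
    · rw [subg_convRel_iff]
      exact not_subg_H3rel (E := convRel E)
        fun _ _ _ h h' => hf.rightUnique_of_iosInj hinj rightUnique_dCycRel h h'
    · obtain ⟨g, -, hg⟩ := hsub
      have : NeZero m := ⟨by omega⟩
      exact dvd_of_isHom_dCycRel (hf.comp hg)
  · rintro ⟨hH, hHc, hcyc⟩
    have hloop : NoLoops E := fun x hx =>
      absurd (hcyc 1 le_rfl (subg_dCycRel_one_of_loop hx)) (by norm_num)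
    have hin := leftUnique_of_not_subg_H3rel hloop hH
    have hout : Relator.RightUnique E := fun _ _ _ h h' =>
      leftUnique_of_not_subg_H3rel (E := convRel E) hloop (subg_convRel_iff.not.1 hHc) h h'
    obtain ⟨s, hs⟩ := hout.exists_fun
    obtain ⟨f, hf⟩ := exists_zmod_potential (k := 3) fun _ _ h => h.dvd_of_closed hs hin hcyc
    exact ⟨f, fun x y hxy => dCycRel_iff.2 (hf x y hxy),
      iosInj_of_leftUnique_of_rightUnique hin hout f⟩

theorem stmt6_general {V : Type} (E : V → V → Prop) :
    ((∃ f : V → Fin 3, IsHom E (DCycRel 3) f ∧ IosInj E f) ↔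
        (¬ Subg H3rel E ∧ ¬ Subg (convRel H3rel) E ∧
          ∀ m : ℕ, 1 ≤ m → Subg (DCycRel m) E → 3 ∣ m)) ∧
    ((∃ f : V → Fin 3, IsHom E (DCycRel 3) f ∧ IosInj E f) ↔
        ¬ (Subg H3rel E ∨ Subg (convRel H3rel) E ∨
            ∃ m : ℕ, 1 ≤ m ∧ ¬ 3 ∣ m ∧ Subg (DCycRel m) E)) := by
  have h := exists_iosInj_hom_dCycRel_three_iff E
  refine ⟨h, h.trans ?_⟩
  simp only [not_or, not_exists, not_and, not_imp_not]

/-- An irreflexive oriented graph `G` has an ios-injective homomorphism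
to the directed 3-cycle `C_3` iff neither `H_3` nor `H_3^c` is a subgraph of `G` and
every directed cycle in `G` has length divisible by 3; equivalently iff none of
`H_3`, `H_3^c` and `C_n` (`n` not ≡ 0 mod 3) is a subgraph of `G`. -/
theorem stmt6 {V : Type} (E : V → V → Prop) (hor : IsOriented E) (hirr : NoLoops E) :
    ((∃ f : V → Fin 3, IsHom E (DCycRel 3) f ∧ IosInj E f) ↔
        (¬ Subg H3rel E ∧ ¬ Subg (convRel H3rel) E ∧
          ∀ m : ℕ, 1 ≤ m → Subg (DCycRel m) E → 3 ∣ m)) ∧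
    ((∃ f : V → Fin 3, IsHom E (DCycRel 3) f ∧ IosInj E f) ↔
        ¬ (Subg H3rel E ∨ Subg (convRel H3rel) E ∨
            ∃ m : ℕ, 1 ≤ m ∧ ¬ 3 ∣ m ∧ Subg (DCycRel m) E)) :=
  stmt6_general E
end

section
/- An irreflexive oriented graph G has an iot-injective homomorphism to the reflexive one-vertex tournament T_1^r if and only if none of H_3, H_3^c and P_3 is a subgraph of G, that is, if and only if G is a disjoint union of copies of T_1 and T_2 (isolated vertices and single arcs). -/
lemma inj3 {V : Type} {a b c : V} (hab : a ≠ b) (hac : a ≠ c) (hbc : b ≠ c) :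
    Function.Injective ![a, b, c] := by
  intro i j h
  fin_cases i <;> fin_cases j <;> simp_all

/-- An irreflexive oriented graph `G` has an iot-injective homomorphism
to `T_1^r` iff none of `H_3`, `H_3^c`, `P_3` is a subgraph of `G`, that is, iff `G` is
a disjoint union of copies of `T_1` and `T_2` (equivalently, every vertex is incident
with at most one arc). -/
theorem stmt13 {V : Type} (E : V → V → Prop) (hor : IsOriented E) (hirr : NoLoops E) :
    ((∃ f : V → PUnit, IsHom E T1r f ∧ IotInj E f) ↔
        ¬ (Subg H3rel E ∨ Subg (convRel H3rel) E ∨ Subg (DPathRel 3) E)) ∧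
    (¬ (Subg H3rel E ∨ Subg (convRel H3rel) E ∨ Subg (DPathRel 3) E) ↔
        ∀ x : V, Set.Subsingleton {y | E x y ∨ E y x}) := by

  have key : (∀ x : V, Set.Subsingleton {y | E x y ∨ E y x}) ↔
      ¬ (Subg H3rel E ∨ Subg (convRel H3rel) E ∨ Subg (DPathRel 3) E) := by
    constructor
    · rintro h (⟨g, hg, hh⟩ | ⟨g, hg, hh⟩ | ⟨g, hg, hh⟩)
      · have h1 : E (g 0) (g 1) := hh 0 1 (Or.inl ⟨rfl, rfl⟩)
        have h2 : E (g 2) (g 1) := hh 2 1 (Or.inr ⟨rfl, rfl⟩)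
        have := h (g 1) (Or.inr h1) (Or.inr h2)
        exact absurd (hg this) (by decide)
      · have h1 : E (g 1) (g 0) := hh 1 0 (Or.inl ⟨rfl, rfl⟩)
        have h2 : E (g 1) (g 2) := hh 1 2 (Or.inr ⟨rfl, rfl⟩)
        have := h (g 1) (Or.inl h1) (Or.inl h2)
        exact absurd (hg this) (by decide)
      · have h1 : E (g 0) (g 1) := hh 0 1 (by norm_num [DPathRel])
        have h2 : E (g 1) (g 2) := hh 1 2 (by norm_num [DPathRel])
        have := h (g 1) (Or.inr h1) (Or.inl h2)
        exact absurd (hg this) (by decide)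
    · intro h x y hy z hz
      by_contra hne
      have hxy : x ≠ y := by rintro rfl; rcases hy with h' | h' <;> exact hirr x h'
      have hxz : x ≠ z := by rintro rfl; rcases hz with h' | h' <;> exact hirr x h'
      rcases hy with hy | hy <;> rcases hz with hz | hz
      · exact h (Or.inr (Or.inl ⟨![y, x, z], inj3 (Ne.symm hxy) hne hxz,
          by rintro a b (⟨rfl, rfl⟩ | ⟨rfl, rfl⟩) <;> simpa⟩))
      · refine h (Or.inr (Or.inr ⟨![z, x, y], inj3 (Ne.symm hxz) (Ne.symm hne) hxy, ?_⟩))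
        intro a b hab
        fin_cases a <;> fin_cases b <;> simp_all [DPathRel]
      · refine h (Or.inr (Or.inr ⟨![y, x, z], inj3 (Ne.symm hxy) hne hxz, ?_⟩))
        intro a b hab
        fin_cases a <;> fin_cases b <;> simp_all [DPathRel]
      · exact h (Or.inl ⟨![y, x, z], inj3 (Ne.symm hxy) hne hxz,
          by rintro a b (⟨rfl, rfl⟩ | ⟨rfl, rfl⟩) <;> simpa⟩)
  have key2 : (∃ f : V → PUnit, IsHom E T1r f ∧ IotInj E f) ↔
      ∀ x : V, Set.Subsingleton {y | E x y ∨ E y x} := by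
    constructor
    · rintro ⟨f, _, hinj⟩ x y hy z hz
      refine hinj x ?_ ?_ (Subsingleton.elim _ _)
      · exact hy.elim (fun h' => Or.inr h') (fun h' => Or.inl h')
      · exact hz.elim (fun h' => Or.inr h') (fun h' => Or.inl h')
    · intro h
      refine ⟨fun _ => PUnit.unit, fun _ _ _ => trivial, fun x y hy z hz _ => ?_⟩
      exact h x (hy.elim (fun h' => Or.inr h') (fun h' => Or.inl h'))
        (hz.elim (fun h' => Or.inr h') (fun h' => Or.inl h'))
  exact ⟨key2.trans key, key.symm⟩
end
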